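/- Let G ⊂ ℝⁿ be a convex body and let K, L be nonempty compact convex subsets of G with K ≠ L, and set d := d_H(K,L). Then there exist a unit vector u ∈ 𝕊ⁿ⁻¹ and a point q such that either (i) q ∈ L and the interior of C_G(u, d) + q is contained in (G + K ∪̃ L) \ (G + K), or (ii) q ∈ K and the interior of C_G(u, d) + q is contained in (G + K ∪̃ L) \ (G + L). -/

import Mathlib

/-!
Since `K ≠ L` are compact, `d > 0` and, say, some `p ∈ L` lies at distance exactly `d` from `K`.
With `q` the nearest point of `K` to `p` and `u = (p - q) / d`, convexity of `K` (the obtuse angle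
at `q`) gives `⟪u, p - k⟫ ≥ d` for all `k ∈ K`. A point `z` of the interior of the cap satisfies
`⟪u, z⟫ > h_G(u) - d`, so `⟪u, z + p⟫ > h_G(u) + ⟪u, k⟫ ≥ ⟪u, g + k⟫` for all `g ∈ G`, `k ∈ K`:
`z + p ∉ G + K`, while `z + p ∈ G + L ⊆ G + K ∪̃ L`.
-/

open MeasureTheory Metric Pointwise
open scoped RealInnerProductSpace

/-- Support function `h_G(u) = sup_{x ∈ G} ⟪u, x⟫`. -/
noncomputable def suppFn {n : ℕ} (G : Set (EuclideanSpace ℝ (Fin n)))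
    (u : EuclideanSpace ℝ (Fin n)) : ℝ :=
  sSup ((fun x => ⟪u, x⟫) '' G)

/-- The cap of `G` in direction `u` with height `h`:
`C_G(u,h) = {x ∈ G : ⟪u, x⟫ ≥ h_G(u) − h}`. -/
noncomputable def capG {n : ℕ} (G : Set (EuclideanSpace ℝ (Fin n)))
    (u : EuclideanSpace ℝ (Fin n)) (h : ℝ) : Set (EuclideanSpace ℝ (Fin n)) :=
  {x ∈ G | suppFn G u - h ≤ ⟪u, x⟫}

theorem exists_infDist_eq_hausdorffDist {α : Type*} [MetricSpace α] {K L : Set α}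
    (hKcp : IsCompact K) (hKne : K.Nonempty) (hLcp : IsCompact L) (hLne : L.Nonempty) :
    (∃ p ∈ K, infDist p L = hausdorffDist K L) ∨ ∃ p ∈ L, infDist p K = hausdorffDist K L := by
  obtain ⟨p, hpK, hp_max⟩ := hKcp.exists_isMaxOn hKne (continuous_infDist_pt L).continuousOn
  obtain ⟨q, hqL, hq_max⟩ := hLcp.exists_isMaxOn hLne (continuous_infDist_pt K).continuousOn
  have hfin : hausdorffEDist K L ≠ ⊤ :=
    hausdorffEDist_ne_top_of_nonempty_of_bounded hKne hLne hKcp.isBounded hLcp.isBounded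
  have hle : hausdorffDist K L ≤ max (infDist p L) (infDist q K) :=
    hausdorffDist_le_of_infDist (le_max_of_le_left infDist_nonneg)
      (fun x hx => le_max_of_le_left (hp_max hx)) (fun x hx => le_max_of_le_right (hq_max hx))
  have hp : infDist p L ≤ hausdorffDist K L := infDist_le_hausdorffDist_of_mem hpK hfin
  have hq : infDist q K ≤ hausdorffDist K L := by
    rw [hausdorffDist_comm]
    exact infDist_le_hausdorffDist_of_mem hqL (by rwa [hausdorffEDist_comm])
  rcases le_total (infDist q K) (infDist p L) with h | h
  · exact .inl ⟨p, hpK, le_antisymm hp (max_eq_left h ▸ hle)⟩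
  · exact .inr ⟨q, hqL, le_antisymm hq (max_eq_right h ▸ hle)⟩

theorem hausdorffDist_pos_of_ne {α : Type*} [MetricSpace α] {K L : Set α}
    (hKcp : IsCompact K) (hKne : K.Nonempty) (hLcp : IsCompact L) (hLne : L.Nonempty)
    (hKL : K ≠ L) : 0 < hausdorffDist K L := by
  refine hausdorffDist_nonneg.lt_of_ne fun h => hKL ?_
  exact (hKcp.isClosed.hausdorffDist_zero_iff_eq hLcp.isClosed
    (hausdorffEDist_ne_top_of_nonempty_of_bounded hKne hLne hKcp.isBounded hLcp.isBounded)).1 h.symm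

theorem exists_unit_infDist_le_inner_sub {E : Type*} [NormedAddCommGroup E]
    [InnerProductSpace ℝ E] {K : Set E} (hKcp : IsCompact K) (hKne : K.Nonempty)
    (hKcv : Convex ℝ K) {p : E} (hp : 0 < infDist p K) :
    ∃ u : E, ‖u‖ = 1 ∧ ∀ k ∈ K, infDist p K ≤ ⟪u, p - k⟫ := by
  set d := infDist p K
  obtain ⟨q, hqK, hq⟩ := hKcp.exists_infDist_eq_dist hKne p
  have hpq : ‖p - q‖ = d := by rw [← dist_eq_norm, ← hq]
  have hobtuse : ∀ k ∈ K, ⟪p - q, k - q⟫ ≤ 0 := by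
    refine (norm_eq_iInf_iff_real_inner_le_zero hKcv hqK).1 ?_
    simpa only [← dist_eq_norm, hq] using (infDist_eq_iInf (x := p) (s := K))
  refine ⟨d⁻¹ • (p - q), ?_, fun k hk => ?_⟩
  · rw [norm_smul, hpq, norm_inv, Real.norm_of_nonneg hp.le, inv_mul_cancel₀ hp.ne']
  · have hsplit : ⟪p - q, p - k⟫ = d ^ 2 - ⟪p - q, k - q⟫ := by
      rw [← hpq, ← real_inner_self_eq_norm_sq, ← inner_sub_right]
      congr 1
      abel
    rw [real_inner_smul_left, hsplit, le_inv_mul_iff₀ hp]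
    nlinarith [hobtuse k hk]

section Cap

variable {n : ℕ} {G : Set (EuclideanSpace ℝ (Fin n))} {u : EuclideanSpace ℝ (Fin n)}

theorem inner_le_suppFn (hG : Bornology.IsBounded G) {x : EuclideanSpace ℝ (Fin n)}
    (hx : x ∈ G) : ⟪u, x⟫ ≤ suppFn G u :=
  le_csSup ((innerSL ℝ u).lipschitz.isBounded_image hG).bddAbove ⟨x, hx, rfl⟩

theorem lt_inner_of_mem_interior_capG (hu : ‖u‖ = 1) {h : ℝ} {z : EuclideanSpace ℝ (Fin n)}
    (hz : z ∈ interior (capG G u h)) : suppFn G u - h < ⟪u, z⟫ := by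
  obtain ⟨ε, hε, hball⟩ := Metric.isOpen_iff.1 isOpen_interior z hz
  have hmem : z - (ε / 2) • u ∈ capG G u h := interior_subset <| hball <| by
    rw [mem_ball, dist_eq_norm, sub_sub_cancel_left, norm_neg, norm_smul, hu, mul_one,
      Real.norm_of_nonneg (by positivity)]
    linarith
  have hmem_ineq := hmem.2
  rw [inner_sub_right, real_inner_smul_right, real_inner_self_eq_norm_sq, hu] at hmem_ineq
  linarith

theorem interior_capG_add_singleton_subset_diff (hG : Bornology.IsBounded G) (hu : ‖u‖ = 1)
    {K M : Set (EuclideanSpace ℝ (Fin n))} {p : EuclideanSpace ℝ (Fin n)} (hpM : p ∈ M)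
    {d : ℝ} (hK : ∀ k ∈ K, d ≤ ⟪u, p - k⟫) :
    interior (capG G u d) + {p} ⊆ (G + M) \ (G + K) := by
  rintro _ ⟨z, hz, p, rfl, rfl⟩
  refine ⟨Set.add_mem_add (interior_subset hz).1 hpM, ?_⟩
  rintro ⟨g, hg, k, hk, hgk⟩
  have hsum : ⟪u, g⟫ + ⟪u, k⟫ = ⟪u, z⟫ + ⟪u, p⟫ := by
    rw [← inner_add_right, ← inner_add_right]
    exact congrArg _ hgk
  have hpk : d ≤ ⟪u, p⟫ - ⟪u, k⟫ := inner_sub_right (𝕜 := ℝ) u p k ▸ hK k hk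
  linarith [lt_inner_of_mem_interior_capG hu hz, inner_le_suppFn (u := u) hG hg]

end Cap

theorem stmt9_general {n : ℕ} (G : Set (EuclideanSpace ℝ (Fin n)))
    (hGcp : IsCompact G)
    (K L : Set (EuclideanSpace ℝ (Fin n)))
    (hKne : K.Nonempty) (hKcp : IsCompact K) (hKcv : Convex ℝ K)
    (hLne : L.Nonempty) (hLcp : IsCompact L) (hLcv : Convex ℝ L)
    (hKL : K ≠ L) :
    ∃ u : EuclideanSpace ℝ (Fin n), ‖u‖ = 1 ∧
      ∃ q : EuclideanSpace ℝ (Fin n),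
        ((q ∈ L ∧ interior (capG G u (hausdorffDist K L)) + ({q} : Set _) ⊆
            (G + closure (convexHull ℝ (K ∪ L))) \ (G + K)) ∨
          (q ∈ K ∧ interior (capG G u (hausdorffDist K L)) + ({q} : Set _) ⊆
            (G + closure (convexHull ℝ (K ∪ L))) \ (G + L))) := by
  have hd := hausdorffDist_pos_of_ne hKcp hKne hLcp hLne hKL
  have mem_hull {p} (hp : p ∈ K ∪ L) : p ∈ closure (convexHull ℝ (K ∪ L)) :=
    subset_closure (subset_convexHull ℝ _ hp)
  rcases exists_infDist_eq_hausdorffDist hKcp hKne hLcp hLne with ⟨p, hpK, hp⟩ | ⟨p, hpL, hp⟩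
  · obtain ⟨u, hu, hL⟩ := exists_unit_infDist_le_inner_sub hLcp hLne hLcv (hp ▸ hd)
    exact ⟨u, hu, p, .inr ⟨hpK, interior_capG_add_singleton_subset_diff hGcp.isBounded hu
      (mem_hull (.inl hpK)) (hp ▸ hL)⟩⟩
  · obtain ⟨u, hu, hK⟩ := exists_unit_infDist_le_inner_sub hKcp hKne hKcv (hp ▸ hd)
    exact ⟨u, hu, p, .inl ⟨hpL, interior_capG_add_singleton_subset_diff hGcp.isBounded hu
      (mem_hull (.inr hpL)) (hp ▸ hK)⟩⟩

theorem stmt9 {n : ℕ} (G : Set (EuclideanSpace ℝ (Fin n)))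
    (hGcv : Convex ℝ G) (hGcp : IsCompact G) (hGint : (interior G).Nonempty)
    (K L : Set (EuclideanSpace ℝ (Fin n)))
    (hKne : K.Nonempty) (hKcp : IsCompact K) (hKcv : Convex ℝ K) (hKG : K ⊆ G)
    (hLne : L.Nonempty) (hLcp : IsCompact L) (hLcv : Convex ℝ L) (hLG : L ⊆ G)
    (hKL : K ≠ L) :
    ∃ u : EuclideanSpace ℝ (Fin n), ‖u‖ = 1 ∧
      ∃ q : EuclideanSpace ℝ (Fin n),
        ((q ∈ L ∧ interior (capG G u (hausdorffDist K L)) + ({q} : Set _) ⊆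
            (G + closure (convexHull ℝ (K ∪ L))) \ (G + K)) ∨
          (q ∈ K ∧ interior (capG G u (hausdorffDist K L)) + ({q} : Set _) ⊆
            (G + closure (convexHull ℝ (K ∪ L))) \ (G + L))) :=
  stmt9_general G hGcp K L hKne hKcp hKcv hLne hLcp hLcv hKL
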